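/- Let X be a real Banach space that is midpoint locally uniformly rotund (MLUR), and let x, y ∈ X with x ≠ y. Then for every r with 0 < r < ‖x − y‖, the diameter of B_X(x, r + 1/n) ∩ B_X(y, ‖x − y‖ − r + 1/n) tends to 0 as n → ∞, where B_X(c, s) denotes the closed ball in X with center c and radius s. -/

import Mathlib

/-!
For `u, v` in the intersection of the balls of radii `r + 1/n` and `d - r + 1/n`, where
`d = ‖x - y‖`, the triangle inequality through `x` and `y` gives `‖(y - x) ± (u - v)‖ ≤ d + 2/n`.
After dividing by `d`, the two points `(y - x ± (u - v)) / d` have norms tending to `1` and the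
fixed midpoint `(y - x) / d` of norm `1`, so MLUR forces `u - v → 0`. As this holds for every
choice of `u, v` along every subsequence, the diameters tend to `0`.
-/

open Filter

/-- `X` is midpoint locally uniformly rotund (MLUR). -/
def MLUR (X : Type*) [NormedAddCommGroup X] [NormedSpace ℝ X] : Prop :=
  ∀ (x y : ℕ → X) (z : X),
    Tendsto (fun n => ‖x n‖) atTop (nhds 1) →
    Tendsto (fun n => ‖y n‖) atTop (nhds 1) →
    Tendsto (fun n => (1 / 2 : ℝ) • (x n + y n)) atTop (nhds z) → ‖z‖ = 1 →
    Tendsto (fun n => ‖x n - y n‖) atTop (nhds 0)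

open Metric Topology

theorem Metric.tendsto_diam_nhds_zero_of_forall_seq {α : Type*} [PseudoMetricSpace α]
    {S : ℕ → Set α}
    (h : ∀ φ : ℕ → ℕ, Tendsto φ atTop atTop → ∀ u v : ℕ → α, (∀ k, u k ∈ S (φ k)) →
      (∀ k, v k ∈ S (φ k)) → Tendsto (fun k => dist (u k) (v k)) atTop (𝓝 0)) :
    Tendsto (fun n => diam (S n)) atTop (𝓝 0) := by
  refine tendsto_order.2 ⟨fun a ha => Eventually.of_forall fun _ => ha.trans_le diam_nonneg,
    fun ε hε => ?_⟩
  by_contra hnot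
  have hfreq : ∃ᶠ n in atTop, ε ≤ diam (S n) := by
    simpa only [not_eventually, not_lt] using hnot
  obtain ⟨φ, hφ, hφε⟩ := extraction_of_frequently_atTop hfreq
  have hfar : ∀ k, ∃ u ∈ S (φ k), ∃ v ∈ S (φ k), ε / 2 < dist u v := by
    intro k
    by_contra! hclose
    linarith [hφε k, diam_le_of_forall_dist_le (by linarith) hclose]
  choose u hu v hv huv using hfar
  obtain ⟨k, hk⟩ :=
    ((h φ hφ.tendsto_atTop u v hu hv).eventually (gt_mem_nhds (half_pos hε))).exists
  exact (hk.trans (huv k)).false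

theorem norm_sub_add_sub_le_of_mem_closedBall {E : Type*} [SeminormedAddCommGroup E]
    {x y p q : E} {ρ σ : ℝ} (hp : p ∈ closedBall x ρ) (hq : q ∈ closedBall y σ) :
    ‖(y - x) + (p - q)‖ ≤ ρ + σ := by
  rw [mem_closedBall_iff_norm] at hp hq
  calc ‖(y - x) + (p - q)‖ = ‖(p - x) - (q - y)‖ := by abel_nf
    _ ≤ ‖p - x‖ + ‖q - y‖ := norm_sub_le _ _
    _ ≤ ρ + σ := add_le_add hp hq

theorem tendsto_norm_add_of_norm_add_le_of_norm_sub_le {E : Type*} [SeminormedAddCommGroup E]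
    [NormedSpace ℝ E]
    {z : E} {a : ℕ → E} {δ : ℕ → ℝ} (hδ : Tendsto δ atTop (𝓝 0))
    (hadd : ∀ n, ‖z + a n‖ ≤ ‖z‖ + δ n) (hsub : ∀ n, ‖z - a n‖ ≤ ‖z‖ + δ n) :
    Tendsto (fun n => ‖z + a n‖) atTop (𝓝 ‖z‖) := by
  have hlower : ∀ n, ‖z‖ - δ n ≤ ‖z + a n‖ := fun n => by
    have h2z : ‖(z + a n) + (z - a n)‖ = 2 * ‖z‖ := by
      rw [show (z + a n) + (z - a n) = (2 : ℝ) • z by module, norm_smul, Real.norm_two]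
    linarith [norm_add_le (z + a n) (z - a n), hsub n]
  refine tendsto_of_tendsto_of_tendsto_of_le_of_le ?_ ?_ hlower hadd
  · simpa using (tendsto_const_nhds (x := ‖z‖)).sub hδ
  · simpa using (tendsto_const_nhds (x := ‖z‖)).add hδ

theorem MLUR.tendsto_nhds_zero_of_norm_add_le_of_norm_sub_le {X : Type*} [NormedAddCommGroup X]
    [NormedSpace ℝ X] (hX : MLUR X) {z : X} (hz : z ≠ 0) {a : ℕ → X} {δ : ℕ → ℝ}
    (hδ : Tendsto δ atTop (𝓝 0)) (hadd : ∀ n, ‖z + a n‖ ≤ ‖z‖ + δ n)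
    (hsub : ∀ n, ‖z - a n‖ ≤ ‖z‖ + δ n) :
    Tendsto a atTop (𝓝 0) := by
  set c := ‖z‖⁻¹
  have hc : 0 < c := inv_pos.2 (norm_pos_iff.2 hz)
  have hcz : c * ‖z‖ = 1 := inv_mul_cancel₀ (norm_ne_zero_iff.2 hz)
  have hnorm : ∀ b : ℕ → X, (∀ n, ‖z + b n‖ ≤ ‖z‖ + δ n) → (∀ n, ‖z - b n‖ ≤ ‖z‖ + δ n) →
      Tendsto (fun n => ‖c • (z + b n)‖) atTop (𝓝 1) := by
    intro b hb hb'
    simpa only [norm_smul, Real.norm_of_nonneg hc.le, hcz]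
      using (tendsto_norm_add_of_norm_add_le_of_norm_sub_le hδ hb hb').const_mul c
  have hneg := hnorm (fun n => -a n) (by simpa only [← sub_eq_add_neg] using hsub)
    (by simpa only [sub_neg_eq_add] using hadd)
  have hmid : (fun n => (1 / 2 : ℝ) • (c • (z + a n) + c • (z + -a n))) = fun _ => c • z := by
    funext n; module
  have hdiff := hX _ _ (c • z) (hnorm a hadd hsub) hneg (hmid ▸ tendsto_const_nhds)
    (by rw [norm_smul, Real.norm_of_nonneg hc.le, hcz])
  have hdiff_eq : ∀ n, ‖c • (z + a n) - c • (z + -a n)‖ = 2 * c * ‖a n‖ := fun n => by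
    rw [show c • (z + a n) - c • (z + -a n) = (2 * c) • a n by module, norm_smul,
      Real.norm_of_nonneg (by positivity)]
  rw [tendsto_zero_iff_norm_tendsto_zero]
  simpa only [hdiff_eq, ← mul_assoc, inv_mul_cancel₀ (by positivity : 2 * c ≠ 0), one_mul,
    mul_zero] using hdiff.const_mul (2 * c)⁻¹

theorem mlur_diam_ball_intersection_tendsto_zero_general (X : Type*) [NormedAddCommGroup X]
    [NormedSpace ℝ X] (hX : MLUR X)
    (x y : X) (hxy : x ≠ y) (r : ℝ) :
    Tendsto (fun n : ℕ => Metric.diam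
        (Metric.closedBall x (r + 1 / (n : ℝ)) ∩
          Metric.closedBall y (‖x - y‖ - r + 1 / (n : ℝ))))
      atTop (nhds 0) := by
  refine tendsto_diam_nhds_zero_of_forall_seq fun φ hφ u v hu hv => ?_
  have hδ : Tendsto (fun k => 2 * (1 / (φ k : ℝ))) atTop (𝓝 0) := by
    simpa using (tendsto_one_div_atTop_nhds_zero_nat.comp hφ).const_mul (2 : ℝ)
  have hbound : ∀ k, ∀ p ∈ closedBall x (r + 1 / (φ k : ℝ)),
      ∀ q ∈ closedBall y (‖x - y‖ - r + 1 / (φ k : ℝ)),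
      ‖(y - x) + (p - q)‖ ≤ ‖y - x‖ + 2 * (1 / (φ k : ℝ)) := fun k p hp q hq => by
    have := norm_sub_add_sub_le_of_mem_closedBall hp hq
    rw [norm_sub_rev y x]; linarith
  have huv := hX.tendsto_nhds_zero_of_norm_add_le_of_norm_sub_le (sub_ne_zero.2 hxy.symm) hδ
    (fun k => hbound k _ (hu k).1 _ (hv k).2) fun k => by
      rw [← neg_sub (v k), sub_neg_eq_add]
      exact hbound k _ (hv k).1 _ (hu k).2
  simpa only [dist_eq_norm] using (tendsto_zero_iff_norm_tendsto_zero.1 huv)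

theorem mlur_diam_ball_intersection_tendsto_zero (X : Type*) [NormedAddCommGroup X]
    [NormedSpace ℝ X] [CompleteSpace X] (hX : MLUR X)
    (x y : X) (hxy : x ≠ y) (r : ℝ) (hr0 : 0 < r) (hr : r < ‖x - y‖) :
    Tendsto (fun n : ℕ => Metric.diam
        (Metric.closedBall x (r + 1 / (n : ℝ)) ∩
          Metric.closedBall y (‖x - y‖ - r + 1 / (n : ℝ))))
      atTop (nhds 0) :=
  mlur_diam_ball_intersection_tendsto_zero_general X hX x y hxy r
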